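/- arXiv:2201.09050 — 2 statements merged into one kernel-verified Lean document; each statement's English description precedes it below -/
import Mathlib

section
/- For any arrival rate vector λ in the capacity region Λ and any scheduling policy (possibly using full knowledge of arrival statistics, past and future arrivals, and past configurations) that renders the queueing system stable, the long-run average cost lim inf_{T→∞} (1/T) Σ_{t=1}^{T} E[ Σ_{l=1}^{L} ( V·C₁(N^l(t)) + U·C₂(N^l(t−1), N^l(t)) ) ] is at least C_opt(λ). -/
/-!
Average the joint laws of consecutive configurations `(N^l(t-1), N^l(t))` over the slots
`1, …, T`. These averages lie in a compact set, so along any sequence of horizons a further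
subsequence converges, to a law `R^l` on pairs whose two marginals agree (before the limit they
differ by `O(1/T)`); disintegrating `R^l` along its first marginal `π^l` yields a transition
matrix `P^l` with `π^l P^l = π^l`, and the average costs converge to the cost of `(π^l, P^l)`.

Serving a job of remaining size `s + 1` returns it with size `s`, so every service decreases the
total workload `Σ_s s Q_{m,s}` by exactly one. Since the expected queues stay bounded, the
arrival rate of type-`m` workload, `Σ_s s λ_{m,s}`, is at most the average service offered, and
in the limit at most `Σ_l Σ_N π^l_N Σ_s N_{m,s}`. Splitting `λ` among the servers in proportion
to their limiting service makes `(λ^l, π^l, P^l)` feasible, so every limit point of the average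
cost is at least `C_opt(λ)`.
-/

open MeasureTheory ProbabilityTheory Filter
open Topology

/-- A job service configuration: `N m s` is the number of VMs offered to jobs that
require a type-`m` VM for `s+1` more slots (sizes `1,…,S` are indexed by `Fin S`). -/
abbrev Config (M S : ℕ) := Fin M → Fin S → ℕ

/-- `nxt f i = f (i+1)`, with the convention that entries beyond the maximal size are `0`. -/
def nxt {S : ℕ} (f : Fin S → ℕ) (i : Fin S) : ℕ :=
  if h : (i : ℕ) + 1 < S then f ⟨(i : ℕ) + 1, h⟩ else 0

/-- Affine server running cost `C₁(N) = c₀·1{N ≠ 0} + Σ_m c_m Σ_s N_{m,s}`. -/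
noncomputable def C1 {M S : ℕ} (c0 : ℝ) (c : Fin M → ℝ) (N : Config M S) : ℝ :=
  (if N = 0 then 0 else c0) + ∑ m, c m * ∑ s, (N m s : ℝ)

/-- Job migration cost `C₂(n, N) = Σ_m Σ_{s=2}^{S} (n_{m,s} − N_{m,s−1})⁺`
(truncated natural subtraction realizes the positive part). -/
def C2 {M S : ℕ} (n N : Config M S) : ℕ :=
  ∑ m, ∑ i : Fin S, (nxt (n m) i - N m i)

/-- The capacity region `Λ`: `λ ∈ Λ` iff `λ ≥ 0` and the per-type workload rates
`Σ_s s·λ_{m,s}` are a convex combination (per server) of feasible configurations. -/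
def inCap {L M S : ℕ} (𝒩 : Fin L → Finset (Config M S))
    (lam : Fin M → Fin S → ℝ) : Prop :=
  (∀ m s, 0 ≤ lam m s) ∧
  ∃ β : Fin L → Config M S → ℝ,
    (∀ l N, 0 ≤ β l N) ∧
    (∀ l, ∑ N ∈ 𝒩 l, β l N = 1) ∧
    ∀ m, ∑ s : Fin S, ((s : ℕ) + 1 : ℝ) * lam m s
        = ∑ l, ∑ N ∈ 𝒩 l, β l N * ∑ s, (N m s : ℝ)

/-- Achievable values of the server-running-cost-only (static policies) problem. -/
def CbarOptSet {L M S : ℕ} (𝒩 : Fin L → Finset (Config M S))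
    (c0 : ℝ) (c : Fin M → ℝ) (lam : Fin M → Fin S → ℝ) : Set ℝ :=
  {x | ∃ (lamL : Fin L → Fin M → Fin S → ℝ) (π : Fin L → Config M S → ℝ),
      (∀ l m s, 0 ≤ lamL l m s) ∧
      (∀ m s, ∑ l, lamL l m s = lam m s) ∧
      (∀ l N, 0 ≤ π l N) ∧
      (∀ l N, N ∉ 𝒩 l → π l N = 0) ∧
      (∀ l, ∑ N ∈ 𝒩 l, π l N = 1) ∧
      (∀ l m, ∑ s : Fin S, ((s : ℕ) + 1 : ℝ) * lamL l m s
          ≤ ∑ N ∈ 𝒩 l, π l N * ∑ s, (N m s : ℝ)) ∧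
      x = ∑ l, ∑ N ∈ 𝒩 l, π l N * C1 c0 c N}

/-- `C̄_opt(λ)`: the optimal average server running cost subject to stability. -/
noncomputable def CbarOpt {L M S : ℕ} (𝒩 : Fin L → Finset (Config M S))
    (c0 : ℝ) (c : Fin M → ℝ) (lam : Fin M → Fin S → ℝ) : ℝ :=
  sInf (CbarOptSet 𝒩 c0 c lam)

/-- Achievable values of the joint server-running plus migration cost problem over
stationary Markov (configuration-valued) policies. -/
def CoptSet {L M S : ℕ} (𝒩 : Fin L → Finset (Config M S))
    (c0 : ℝ) (c : Fin M → ℝ) (V U : ℝ) (lam : Fin M → Fin S → ℝ) : Set ℝ :=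
  {x | ∃ (lamL : Fin L → Fin M → Fin S → ℝ) (π : Fin L → Config M S → ℝ)
        (P : Fin L → Config M S → Config M S → ℝ),
      (∀ l m s, 0 ≤ lamL l m s) ∧
      (∀ m s, ∑ l, lamL l m s = lam m s) ∧
      (∀ l N, 0 ≤ π l N) ∧
      (∀ l N, N ∉ 𝒩 l → π l N = 0) ∧
      (∀ l, ∑ N ∈ 𝒩 l, π l N = 1) ∧
      (∀ l N N', 0 ≤ P l N N') ∧
      (∀ l, ∀ N ∈ 𝒩 l, ∑ N' ∈ 𝒩 l, P l N N' = 1) ∧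
      (∀ l, ∀ N ∈ 𝒩 l, ∑ N' ∈ 𝒩 l, π l N' * P l N' N = π l N) ∧
      (∀ l m, ∑ s : Fin S, ((s : ℕ) + 1 : ℝ) * lamL l m s
          ≤ ∑ N ∈ 𝒩 l, π l N * ∑ s, (N m s : ℝ)) ∧
      x = ∑ l, (V * ∑ N ∈ 𝒩 l, π l N * C1 c0 c N
            + U * ∑ N ∈ 𝒩 l, π l N * ∑ N' ∈ 𝒩 l, P l N N' * (C2 N N' : ℝ))}

/-- `C_opt(λ)`: the optimal weighted average server running plus migration cost. -/
noncomputable def Copt {L M S : ℕ} (𝒩 : Fin L → Finset (Config M S))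
    (c0 : ℝ) (c : Fin M → ℝ) (V U : ℝ) (lam : Fin M → Fin S → ℝ) : ℝ :=
  sInf (CoptSet 𝒩 c0 c V U lam)

lemma apply_eq_sum_indicator_preimage {Ω γ : Type*} {X : Ω → γ} {F : Finset γ} (f : γ → ℝ)
    {ω : Ω} (hω : X ω ∈ F) :
    f (X ω) = ∑ x ∈ F, (X ⁻¹' {x}).indicator 1 ω * f x := by
  rw [Finset.sum_eq_single_of_mem (X ω) hω fun x _ hx => by simp [Ne.symm hx]]
  simp

section FiniteRange

variable {Ω γ : Type*} [MeasurableSpace Ω] [MeasurableSpace γ] [MeasurableSingletonClass γ]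
  {μ : Measure Ω} {X : Ω → γ} {F : Finset γ}

lemma integrable_comp_of_forall_mem [IsFiniteMeasure μ] (hX : Measurable X)
    (hF : ∀ ω, X ω ∈ F) (f : γ → ℝ) : Integrable (fun ω => f (X ω)) μ := by
  simp_rw [apply_eq_sum_indicator_preimage f (hF _)]
  exact integrable_finsetSum _ fun x _ =>
    ((integrable_const 1).indicator (hX (measurableSet_singleton x))).mul_const _

lemma integral_comp_of_forall_mem [IsFiniteMeasure μ] (hX : Measurable X)
    (hF : ∀ ω, X ω ∈ F) (f : γ → ℝ) :
    ∫ ω, f (X ω) ∂μ = ∑ x ∈ F, μ.real (X ⁻¹' {x}) * f x := by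
  simp_rw [apply_eq_sum_indicator_preimage f (hF _)]
  rw [integral_finsetSum _ fun x _ =>
    ((integrable_const 1).indicator (hX (measurableSet_singleton x))).mul_const _]
  simp_rw [integral_mul_const, integral_indicator_one (hX (measurableSet_singleton _))]

lemma sum_measureReal_preimage_singleton [IsProbabilityMeasure μ] (hX : Measurable X)
    (hF : ∀ ω, X ω ∈ F) : ∑ x ∈ F, μ.real (X ⁻¹' {x}) = 1 := by
  simpa using (integral_comp_of_forall_mem (μ := μ) hX hF fun _ => (1 : ℝ)).symm

lemma sum_measureReal_preimage_prodMk_right [IsFiniteMeasure μ] {Y : Ω → γ}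
    (hX : Measurable X) (hY : Measurable Y) (hF : ∀ ω, Y ω ∈ F) (x : γ) :
    ∑ y ∈ F, μ.real ((fun ω => (X ω, Y ω)) ⁻¹' {(x, y)}) = μ.real (X ⁻¹' {x}) := by
  have hunion : X ⁻¹' {x} = ⋃ y ∈ F, (fun ω => (X ω, Y ω)) ⁻¹' {(x, y)} := by
    ext ω; simpa using fun _ => hF ω
  rw [hunion, measureReal_biUnion_finset]
  · intro y _ y' _ hne
    exact Set.disjoint_left.2 fun ω h h' => hne (by simp_all)
  · exact fun y _ => hX.prodMk hY (measurableSet_singleton _)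

lemma sum_measureReal_preimage_prodMk_left [IsFiniteMeasure μ] {Y : Ω → γ}
    (hX : Measurable X) (hY : Measurable Y) (hF : ∀ ω, X ω ∈ F) (y : γ) :
    ∑ x ∈ F, μ.real ((fun ω => (X ω, Y ω)) ⁻¹' {(x, y)}) = μ.real (Y ⁻¹' {y}) := by
  rw [← sum_measureReal_preimage_prodMk_right hY hX hF y]
  exact Finset.sum_congr rfl fun x _ => congrArg μ.real (by ext ω; simp [and_comm])

end FiniteRange

noncomputable def cesaroMean (u : ℕ → ℝ) (T : ℕ) : ℝ := (T : ℝ)⁻¹ * ∑ t ∈ Finset.Icc 1 T, u t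

lemma cesaroMean_sum {ι : Type*} (s : Finset ι) (u : ι → ℕ → ℝ) (T : ℕ) :
    cesaroMean (fun t => ∑ i ∈ s, u i t) T = ∑ i ∈ s, cesaroMean (u i) T := by
  simp only [cesaroMean, Finset.mul_sum]
  exact Finset.sum_comm

lemma cesaroMean_mul_const (u : ℕ → ℝ) (a : ℝ) (T : ℕ) :
    cesaroMean (fun t => u t * a) T = cesaroMean u T * a := by
  simp only [cesaroMean, ← Finset.sum_mul, mul_assoc]

lemma cesaroMean_mem_Icc {u : ℕ → ℝ} (hu : ∀ t, u t ∈ Set.Icc 0 1) (T : ℕ) :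
    cesaroMean u T ∈ Set.Icc 0 1 := by
  rcases Nat.eq_zero_or_pos T with rfl | hT
  · simp [cesaroMean]
  have hsum : ∑ t ∈ Finset.Icc 1 T, u t ≤ T := by
    simpa using Finset.sum_le_sum fun t (_ : t ∈ Finset.Icc 1 T) => (hu t).2
  refine ⟨mul_nonneg (by positivity) (Finset.sum_nonneg fun t _ => (hu t).1), ?_⟩
  rw [cesaroMean, inv_mul_le_iff₀ (by positivity)]
  simpa using hsum

lemma cesaroMean_sub_shift (u : ℕ → ℝ) (T : ℕ) :
    cesaroMean (fun t => u (t - 1)) T - cesaroMean u T = (T : ℝ)⁻¹ * (u 0 - u T) := by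
  have htelescope : ∑ t ∈ Finset.Icc 1 T, (u (t - 1) - u t) = u 0 - u T := by
    rw [← Finset.Ico_add_one_right_eq_Icc, Finset.sum_Ico_eq_sum_range]
    simpa [add_comm] using Finset.sum_range_sub' u T
  rw [cesaroMean, cesaroMean, ← mul_sub, ← Finset.sum_sub_distrib, htelescope]

lemma tendsto_cesaroMean_sub_shift {u : ℕ → ℝ} {B : ℝ} (hu : ∀ t, |u t| ≤ B) :
    Tendsto (fun T => cesaroMean (fun t => u (t - 1)) T - cesaroMean u T) atTop (𝓝 0) := by
  simp_rw [cesaroMean_sub_shift]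
  have hbdd : ∀ T, |u 0 - u T| ≤ 2 * B := fun T =>
    (abs_sub _ _).trans (by linarith [hu 0, hu T])
  exact tendsto_inv_atTop_zero.comp tendsto_natCast_atTop_atTop |>.zero_mul_isBoundedUnder_le
    ⟨2 * B, eventually_map.2 (Eventually.of_forall hbdd)⟩

lemma exists_subseq_tendsto_of_mem_Icc {ι : Type*} [Countable ι] {u : ℕ → ι → ℝ}
    (hu : ∀ k i, u k i ∈ Set.Icc 0 1) :
    ∃ a : ι → ℝ, ∃ φ : ℕ → ℕ, StrictMono φ ∧ ∀ i, Tendsto (fun k => u (φ k) i) atTop (𝓝 (a i)) := by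
  obtain ⟨a, -, φ, hφ, hlim⟩ := (isCompact_Icc (a := (0 : ι → ℝ)) (b := 1)).tendsto_subseq
    fun k => ⟨fun i => (hu k i).1, fun i => (hu k i).2⟩
  exact ⟨a, φ, hφ, tendsto_pi_nhds.1 hlim⟩

lemma coe_le_liminf_of_forall_subseq {F : ℕ → ℝ} {c : ℝ}
    (h : ∀ ψ : ℕ → ℕ, StrictMono ψ →
      ∃ φ : ℕ → ℕ, StrictMono φ ∧ ∃ x, c ≤ x ∧ Tendsto (fun k => F (ψ (φ k))) atTop (𝓝 x)) :
    (c : EReal) ≤ liminf (fun T => (F T : EReal)) atTop := by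
  refine le_of_forall_gt_imp_ge_of_dense fun b hb => ?_
  obtain ⟨ψ, hψ, hFψ⟩ :=
    extraction_of_frequently_atTop (frequently_lt_of_liminf_lt (by isBoundedDefault) hb)
  obtain ⟨φ, -, x, hcx, hlim⟩ := h ψ hψ
  calc (c : EReal) ≤ x := EReal.coe_le_coe_iff.2 hcx
    _ ≤ b := le_of_tendsto ((continuous_coe_real_ereal.tendsto x).comp hlim)
        (Eventually.of_forall fun k => (hFψ (φ k)).le)

lemma exists_split_of_weighted_sum_le {ι κ : Type*} [Fintype ι] [Fintype κ]
    {a x : κ → ℝ} {w : ι → ℝ} (ha : ∀ s, 0 < a s) (hx : ∀ s, 0 ≤ x s) (hw : ∀ i, 0 ≤ w i)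
    (h : ∑ s, a s * x s ≤ ∑ i, w i) :
    ∃ y : ι → κ → ℝ, (∀ i s, 0 ≤ y i s) ∧ (∀ s, ∑ i, y i s = x s) ∧
      ∀ i, ∑ s, a s * y i s ≤ w i := by
  set W := ∑ i, w i
  have hW : 0 ≤ W := Finset.sum_nonneg fun i _ => hw i
  refine ⟨fun i s => w i / W * x s, fun i s => mul_nonneg (div_nonneg (hw i) hW) (hx s),
    fun s => ?_, fun i => ?_⟩
  · rw [← Finset.sum_mul, ← Finset.sum_div]
    rcases eq_or_ne W 0 with hW0 | hW0
    · have hax : a s * x s = 0 := (Finset.sum_eq_zero_iff_of_nonneg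
        fun s _ => mul_nonneg (ha s).le (hx s)).1 (le_antisymm (hW0 ▸ h)
          (Finset.sum_nonneg fun s _ => mul_nonneg (ha s).le (hx s))) s (Finset.mem_univ s)
      simp [(mul_eq_zero.1 hax).resolve_left (ha s).ne']
    · rw [div_self hW0, one_mul]
  · calc ∑ s, a s * (w i / W * x s) = w i / W * ∑ s, a s * x s := by
          rw [Finset.mul_sum]; exact Finset.sum_congr rfl fun s _ => by ring
      _ ≤ w i / W * W := by gcongr; exact div_nonneg (hw i) hW
      _ ≤ w i := by
          rcases eq_or_ne W 0 with hW0 | hW0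
          · simp [hW0, hw i]
          · rw [div_mul_cancel₀ _ hW0]

lemma exists_stochastic_rowSum_mul_eq {γ : Type*} [DecidableEq γ] (F : Finset γ)
    {R : γ × γ → ℝ} (hR : ∀ q, 0 ≤ R q) :
    ∃ P : γ → γ → ℝ, (∀ n N, 0 ≤ P n N) ∧ (∀ n ∈ F, ∑ N ∈ F, P n N = 1) ∧
      ∀ n, ∀ N ∈ F, (∑ N' ∈ F, R (n, N')) * P n N = R (n, N) := by
  refine ⟨fun n N => if ∑ N' ∈ F, R (n, N') = 0 then (if n = N then 1 else 0)
      else R (n, N) / ∑ N' ∈ F, R (n, N'), fun n N => ?_, fun n hn => ?_, fun n N hN => ?_⟩ <;>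
    dsimp only
  · split_ifs
    · positivity
    · positivity
    · exact div_nonneg (hR _) (Finset.sum_nonneg fun _ _ => hR _)
  · split_ifs with h
    · simp [hn]
    · rw [← Finset.sum_div, div_self h]
  · by_cases h : ∑ N' ∈ F, R (n, N') = 0
    · rw [if_pos h, h, zero_mul, eq_comm]
      exact (Finset.sum_eq_zero_iff_of_nonneg fun _ _ => hR _).1 h N hN
    · rw [if_neg h, mul_div_cancel₀ _ h]

lemma sum_product_mul_fst_eq_mul_snd {γ : Type*} {F : Finset γ} {R : γ × γ → ℝ}
    (hbal : ∀ n ∈ F, ∑ N ∈ F, R (n, N) = ∑ n' ∈ F, R (n', n)) (f : γ → ℝ) :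
    ∑ q ∈ F ×ˢ F, R q * f q.1 = ∑ q ∈ F ×ˢ F, R q * f q.2 := by
  rw [Finset.sum_product, Finset.sum_product_right]
  refine Finset.sum_congr rfl fun n hn => ?_
  simp only [← Finset.sum_mul, hbal n hn]

lemma C1_nonneg {M S : ℕ} {c0 : ℝ} {c : Fin M → ℝ} (hc0 : 0 ≤ c0) (hc : ∀ m, 0 ≤ c m)
    (N : Config M S) : 0 ≤ C1 c0 c N :=
  add_nonneg (by split_ifs; exacts [le_rfl, hc0]) <|
    Finset.sum_nonneg fun m _ => mul_nonneg (hc m) (Finset.sum_nonneg fun _ _ => by positivity)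

lemma bddBelow_CoptSet {L M S : ℕ} (𝒩 : Fin L → Finset (Config M S)) {c0 : ℝ} {c : Fin M → ℝ}
    {V U : ℝ} (hc0 : 0 ≤ c0) (hc : ∀ m, 0 ≤ c m) (hV : 0 ≤ V) (hU : 0 ≤ U)
    (lam : Fin M → Fin S → ℝ) : BddBelow (CoptSet 𝒩 c0 c V U lam) := by
  refine ⟨0, ?_⟩
  rintro x ⟨-, π, P, -, -, hπ, -, -, hP, -, -, -, rfl⟩
  exact Finset.sum_nonneg fun l _ => add_nonneg
    (mul_nonneg hV <| Finset.sum_nonneg fun N _ => mul_nonneg (hπ l N) (C1_nonneg hc0 hc N))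
    (mul_nonneg hU <| Finset.sum_nonneg fun N _ => mul_nonneg (hπ l N) <|
      Finset.sum_nonneg fun N' _ => mul_nonneg (hP l N N') (Nat.cast_nonneg _))

/-- For each server `l`, `R l` is the joint law of two consecutive states of a stationary chain
on `𝒩 l`. -/
structure IsStationaryPairLaw {L M S : ℕ} (𝒩 : Fin L → Finset (Config M S))
    (R : Fin L → Config M S × Config M S → ℝ) : Prop where
  nonneg : ∀ l q, 0 ≤ R l q
  eq_zero_of_notMem : ∀ l q, q ∉ 𝒩 l ×ˢ 𝒩 l → R l q = 0
  sum_eq_one : ∀ l, ∑ q ∈ 𝒩 l ×ˢ 𝒩 l, R l q = 1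
  balanced : ∀ l, ∀ n ∈ 𝒩 l, ∑ N ∈ 𝒩 l, R l (n, N) = ∑ n' ∈ 𝒩 l, R l (n', n)

lemma mem_CoptSet_of_isStationaryPairLaw {L M S : ℕ} {𝒩 : Fin L → Finset (Config M S)} (c0 : ℝ)
    (c : Fin M → ℝ) (V U : ℝ) {lam : Fin M → Fin S → ℝ}
    {R : Fin L → Config M S × Config M S → ℝ} (hR : IsStationaryPairLaw 𝒩 R)
    (hlam : ∀ m s, 0 ≤ lam m s)
    (hwork : ∀ m, ∑ s : Fin S, ((s : ℕ) + 1 : ℝ) * lam m s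
      ≤ ∑ l, ∑ q ∈ 𝒩 l ×ˢ 𝒩 l, R l q * ∑ s, (q.1 m s : ℝ)) :
    ∑ l, ∑ q ∈ 𝒩 l ×ˢ 𝒩 l, R l q * (V * C1 c0 c q.2 + U * C2 q.1 q.2)
      ∈ CoptSet 𝒩 c0 c V U lam := by
  classical
  set π : Fin L → Config M S → ℝ := fun l n => ∑ N ∈ 𝒩 l, R l (n, N)
  have hπR : ∀ l (f : Config M S → ℝ),
      ∑ n ∈ 𝒩 l, π l n * f n = ∑ q ∈ 𝒩 l ×ˢ 𝒩 l, R l q * f q.1 := fun l f => by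
    simp only [π, Finset.sum_product, Finset.sum_mul]
  choose P hP0 hP1 hPR using fun l => exists_stochastic_rowSum_mul_eq (𝒩 l) (hR.nonneg l)
  choose lamL hlamL0 hlamL_sum hlamL_work using fun m =>
    exists_split_of_weighted_sum_le (a := fun s : Fin S => ((s : ℕ) + 1 : ℝ))
      (w := fun l => ∑ n ∈ 𝒩 l, π l n * ∑ s, (n m s : ℝ)) (fun s => by positivity) (hlam m)
      (fun l => Finset.sum_nonneg fun n _ => mul_nonneg
        (Finset.sum_nonneg fun N _ => hR.nonneg l _) (by positivity))
      (by simpa only [hπR] using hwork m)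
  refine ⟨fun l m s => lamL m l s, π, P, fun l m s => hlamL0 m l s, hlamL_sum,
    fun l n => Finset.sum_nonneg fun N _ => hR.nonneg l _, fun l n hn => ?_,
    fun l => by rw [← hR.sum_eq_one l, Finset.sum_product], hP0, hP1, fun l N hN => ?_,
    fun l m => hlamL_work m l, ?_⟩
  · exact Finset.sum_eq_zero fun N _ =>
      hR.eq_zero_of_notMem l _ fun h => hn (Finset.mem_product.1 h).1
  · change _ = ∑ N' ∈ 𝒩 l, R l (N, N')
    rw [hR.balanced l N hN]
    exact Finset.sum_congr rfl fun N' _ => hPR l N' N hN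
  · refine Finset.sum_congr rfl fun l _ => ?_
    have hC2 : ∑ n ∈ 𝒩 l, π l n * ∑ N ∈ 𝒩 l, P l n N * (C2 n N : ℝ)
        = ∑ q ∈ 𝒩 l ×ˢ 𝒩 l, R l q * C2 q.1 q.2 := by
      simp only [Finset.mul_sum, ← mul_assoc, Finset.sum_product]
      exact Finset.sum_congr rfl fun n _ => Finset.sum_congr rfl fun N hN => by rw [hPR l n N hN]
    rw [hC2, hπR, sum_product_mul_fst_eq_mul_snd (hR.balanced l), Finset.mul_sum, Finset.mul_sum,
      ← Finset.sum_add_distrib]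
    exact Finset.sum_congr rfl fun q _ => by ring

lemma nxt_finset_sum {ι : Type*} {S : ℕ} (s : Finset ι) (f : ι → Fin S → ℕ) (i : Fin S) :
    nxt (fun j => ∑ l ∈ s, f l j) i = ∑ l ∈ s, nxt (f l) i := by
  unfold nxt; split_ifs <;> simp

lemma sum_nxt_of_apply_zero {S : ℕ} (h : Fin S → ℕ) (h0 : ∀ i : Fin S, (i : ℕ) = 0 → h i = 0) :
    ∑ i, nxt h i = ∑ i, h i := by
  cases S with
  | zero => simp
  | succ n =>
    rw [Fin.sum_univ_castSucc, Fin.sum_univ_succ, h0 0 rfl, zero_add]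
    simp [nxt, Fin.succ]

def workload {S : ℕ} (q : Fin S → ℕ) : ℕ := ∑ i : Fin S, ((i : ℕ) + 1) * q i

lemma workload_le {S : ℕ} (q : Fin S → ℕ) : workload q ≤ S * ∑ i : Fin S, q i := by
  rw [workload, Finset.mul_sum]
  exact Finset.sum_le_sum fun i _ => Nat.mul_le_mul_right _ i.isLt

lemma workload_step {S : ℕ} {q d a q' : Fin S → ℕ}
    (hrec : ∀ i, q' i = (q i - d i) + a i + min (nxt d i) (nxt q i)) :
    workload q' + ∑ i, min (q i) (d i) = workload q + workload a := by
  have hshift : ∑ i : Fin S, ((i : ℕ) + 1) * min (nxt d i) (nxt q i)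
      = ∑ i : Fin S, (i : ℕ) * min (d i) (q i) := by
    rw [← sum_nxt_of_apply_zero (fun j => (j : ℕ) * min (d j) (q j)) fun i hi => by simp [hi]]
    refine Finset.sum_congr rfl fun i _ => ?_
    unfold nxt; split_ifs <;> simp
  have hserved : ∀ i : Fin S, ((i : ℕ) + 1) * (q i - d i) + (i : ℕ) * min (d i) (q i)
      + min (q i) (d i) = ((i : ℕ) + 1) * q i := fun i => by
    calc _ = ((i : ℕ) + 1) * (q i - d i + min (q i) (d i)) := by rw [min_comm]; ring
      _ = _ := by rw [Nat.sub_add_min_cancel]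
  have hexpand : workload q' = ∑ i : Fin S, ((i : ℕ) + 1) * (q i - d i) + workload a
      + ∑ i : Fin S, (i : ℕ) * min (d i) (q i) := by
    rw [← hshift]
    simp only [workload, hrec, mul_add, Finset.sum_add_distrib]
  rw [hexpand]
  unfold workload
  rw [← Finset.sum_congr rfl fun i _ => hserved i]
  simp only [Finset.sum_add_distrib]
  ring

lemma sum_workload_le {S : ℕ} {q d a : ℕ → Fin S → ℕ}
    (hrec : ∀ t i, q (t + 1) i = (q t i - d t i) + a t i + min (nxt (d t) i) (nxt (q t) i))
    (T : ℕ) :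
    ∑ t ∈ Finset.range T, workload (a t) ≤ workload (q T) + ∑ t ∈ Finset.range T, ∑ i, d t i := by
  induction T with
  | zero => simp
  | succ T ih =>
    have hstep := workload_step (hrec T)
    have hmin : ∑ i, min (q T i) (d T i) ≤ ∑ i, d T i :=
      Finset.sum_le_sum fun i _ => min_le_right _ _
    rw [Finset.sum_range_succ, Finset.sum_range_succ]
    omega

lemma queue_le {S : ℕ} {q d a : ℕ → Fin S → ℕ}
    (hrec : ∀ t i, q (t + 1) i = (q t i - d t i) + a t i + min (nxt (d t) i) (nxt (q t) i))
    {B : ℕ} (hB : ∀ t i, a t i + nxt (d t) i ≤ B) (t : ℕ) (i : Fin S) :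
    q t i ≤ q 0 i + t * B := by
  induction t generalizing i with
  | zero => simp
  | succ t ih =>
    have := min_le_left (nxt (d t) i) (nxt (q t) i)
    rw [hrec, add_mul, one_mul]
    have := ih i; have := hB t i; have := Nat.sub_le (q t i) (d t i)
    omega

lemma integrable_natCast_comp {Ω γ : Type*} [MeasurableSpace Ω] [MeasurableSpace γ] [Countable γ]
    [MeasurableSingletonClass γ] {μ : Measure Ω} [IsFiniteMeasure μ] {X : Ω → γ}
    (hX : Measurable X) (f : γ → ℕ) {B : ℕ} (hB : ∀ ω, f (X ω) ≤ B) :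
    Integrable (fun ω => (f (X ω) : ℝ)) μ :=
  .of_bound ((measurable_of_countable fun x => (f x : ℝ)).comp hX).aestronglyMeasurable B
    (Eventually.of_forall fun ω => by simpa using hB ω)

lemma nxt_le {S : ℕ} {f : Fin S → ℕ} {B : ℕ} (hf : ∀ j, f j ≤ B) (i : Fin S) : nxt f i ≤ B := by
  unfold nxt; split_ifs <;> simp [hf]

lemma apply_le_of_sum_sum_le {M S : ℕ} {N : Config M S} {B : ℕ} (h : ∑ m, ∑ s, N m s ≤ B)
    (m : Fin M) (s : Fin S) : N m s ≤ B :=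
  calc N m s ≤ ∑ s', N m s' := Finset.single_le_sum (fun _ _ => Nat.zero_le _) (Finset.mem_univ s)
    _ ≤ ∑ m', ∑ s', N m' s' :=
      Finset.single_le_sum (f := fun m' => ∑ s', N m' s') (fun _ _ => Nat.zero_le _)
        (Finset.mem_univ m)
    _ ≤ B := h

section Policy

variable {L M S : ℕ} {𝒩 : Fin L → Finset (Config M S)} {Ω : Type*}
  {Npol : ℕ → Fin L → Ω → Config M S}

def configPair (Npol : ℕ → Fin L → Ω → Config M S) (l : Fin L) (t : ℕ) (ω : Ω) :
    Config M S × Config M S :=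
  (Npol (t - 1) l ω, Npol t l ω)

lemma configPair_mem (hNmem : ∀ t l ω, Npol t l ω ∈ 𝒩 l) (l : Fin L) (t : ℕ) (ω : Ω) :
    configPair Npol l t ω ∈ 𝒩 l ×ˢ 𝒩 l :=
  Finset.mem_product.2 ⟨hNmem _ l ω, hNmem t l ω⟩

variable [MeasurableSpace Ω] {μ : Measure Ω}

noncomputable def avgPairLaw (μ : Measure Ω) (Npol : ℕ → Fin L → Ω → Config M S) (T : ℕ)
    (l : Fin L) (q : Config M S × Config M S) : ℝ :=
  cesaroMean (fun t => μ.real (configPair Npol l t ⁻¹' {q})) T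

lemma measurable_configPair (hNmeas : ∀ t l, Measurable (Npol t l)) (l : Fin L) (t : ℕ) :
    Measurable (configPair Npol l t) :=
  (hNmeas (t - 1) l).prodMk (hNmeas t l)

lemma avgPairLaw_eq_zero (hNmem : ∀ t l ω, Npol t l ω ∈ 𝒩 l) (T : ℕ) {l : Fin L}
    {q : Config M S × Config M S} (hq : q ∉ 𝒩 l ×ˢ 𝒩 l) : avgPairLaw μ Npol T l q = 0 := by
  have hempty : ∀ t, configPair Npol l t ⁻¹' {q} = ∅ := fun t =>
    Set.eq_empty_of_forall_notMem fun ω hω => hq (hω ▸ configPair_mem hNmem l t ω)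
  simp [avgPairLaw, cesaroMean, hempty]

variable [IsProbabilityMeasure μ]

lemma cesaroMean_integral_sum_configPair (hNmeas : ∀ t l, Measurable (Npol t l))
    (hNmem : ∀ t l ω, Npol t l ω ∈ 𝒩 l) (g : Fin L → Config M S × Config M S → ℝ) (T : ℕ) :
    cesaroMean (fun t => ∫ ω, ∑ l, g l (configPair Npol l t ω) ∂μ) T
      = ∑ l, ∑ q ∈ 𝒩 l ×ˢ 𝒩 l, avgPairLaw μ Npol T l q * g l q := by
  have hint : ∀ t, ∫ ω, ∑ l, g l (configPair Npol l t ω) ∂μ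
      = ∑ l, ∑ q ∈ 𝒩 l ×ˢ 𝒩 l, μ.real (configPair Npol l t ⁻¹' {q}) * g l q := fun t => by
    rw [integral_finsetSum _ fun l _ => integrable_comp_of_forall_mem
      (measurable_configPair hNmeas l t) (configPair_mem hNmem l t) (g l)]
    exact Finset.sum_congr rfl fun l _ => integral_comp_of_forall_mem
      (measurable_configPair hNmeas l t) (configPair_mem hNmem l t) (g l)
  simp only [hint, cesaroMean_sum, cesaroMean_mul_const, avgPairLaw]

lemma avgPairLaw_mem_Icc (T : ℕ) (l : Fin L) (q : Config M S × Config M S) :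
    avgPairLaw μ Npol T l q ∈ Set.Icc 0 1 :=
  cesaroMean_mem_Icc (fun _ => ⟨measureReal_nonneg, measureReal_le_one⟩) T

lemma sum_avgPairLaw (hNmeas : ∀ t l, Measurable (Npol t l)) (hNmem : ∀ t l ω, Npol t l ω ∈ 𝒩 l)
    {T : ℕ} (hT : 1 ≤ T) (l : Fin L) : ∑ q ∈ 𝒩 l ×ˢ 𝒩 l, avgPairLaw μ Npol T l q = 1 := by
  simp only [avgPairLaw, ← cesaroMean_sum, sum_measureReal_preimage_singleton
    (measurable_configPair hNmeas l _) (configPair_mem hNmem l _)]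
  simp [cesaroMean, Nat.cast_ne_zero.2 (by omega : T ≠ 0)]

lemma sum_avgPairLaw_fst_sub_snd (hNmeas : ∀ t l, Measurable (Npol t l))
    (hNmem : ∀ t l ω, Npol t l ω ∈ 𝒩 l) (T : ℕ) (l : Fin L) (n : Config M S) :
    ∑ N ∈ 𝒩 l, avgPairLaw μ Npol T l (n, N) - ∑ n' ∈ 𝒩 l, avgPairLaw μ Npol T l (n', n)
      = cesaroMean (fun t => μ.real (Npol (t - 1) l ⁻¹' {n})) T
        - cesaroMean (fun t => μ.real (Npol t l ⁻¹' {n})) T := by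
  simp only [avgPairLaw, ← cesaroMean_sum]
  congr 2 <;> funext t
  · exact sum_measureReal_preimage_prodMk_right (hNmeas _ l) (hNmeas _ l) (hNmem _ l) n
  · exact sum_measureReal_preimage_prodMk_left (hNmeas _ l) (hNmeas _ l) (hNmem _ l) n

lemma isStationaryPairLaw_of_tendsto (hNmeas : ∀ t l, Measurable (Npol t l))
    (hNmem : ∀ t l ω, Npol t l ω ∈ 𝒩 l) {σ : ℕ → ℕ} (hσ : Tendsto σ atTop atTop)
    {R : Fin L → Config M S × Config M S → ℝ}
    (hR : ∀ l q, Tendsto (fun k => avgPairLaw μ Npol (σ k) l q) atTop (𝓝 (R l q))) :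
    IsStationaryPairLaw 𝒩 R where
  nonneg l q := ge_of_tendsto' (hR l q) fun k => (avgPairLaw_mem_Icc _ l q).1
  eq_zero_of_notMem l q hq :=
    tendsto_nhds_unique (hR l q) (by simp [avgPairLaw_eq_zero hNmem _ hq])
  sum_eq_one l := tendsto_nhds_unique (tendsto_finsetSum _ fun q _ => hR l q) <|
    tendsto_const_nhds.congr' <| (hσ.eventually (eventually_ge_atTop 1)).mono fun k hk =>
      (sum_avgPairLaw hNmeas hNmem hk l).symm
  balanced l n _ := sub_eq_zero.1 <| tendsto_nhds_unique
    ((tendsto_finsetSum _ fun N _ => hR l (n, N)).sub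
      (tendsto_finsetSum _ fun n' _ => hR l (n', n)))
    (by
      simp_rw [sum_avgPairLaw_fst_sub_snd hNmeas hNmem]
      exact (tendsto_cesaroMean_sub_shift (u := fun t => μ.real (Npol t l ⁻¹' {n})) (B := 1)
        fun t => abs_le.2 ⟨by linarith [measureReal_nonneg (μ := μ) (s := Npol t l ⁻¹' {n})],
          measureReal_le_one⟩).comp hσ)

end Policy

lemma sum_Icc_one_sub_one {β : Type*} [AddCommMonoid β] (f : ℕ → β) (T : ℕ) :
    ∑ t ∈ Finset.Icc 1 T, f (t - 1) = ∑ t ∈ Finset.range T, f t := by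
  rw [← Finset.Ico_add_one_right_eq_Icc, Finset.sum_Ico_eq_sum_range]
  simp [add_comm]

section Queue

variable {L M S Amax Nmax : ℕ} {𝒩 : Fin L → Finset (Config M S)} {Ω : Type*}
  [MeasurableSpace Ω] {μ : Measure Ω} [IsProbabilityMeasure μ]
  {A Q : ℕ → Ω → Fin M → Fin S → ℕ} {Npol : ℕ → Fin L → Ω → Config M S}

lemma integrable_queue (hAbdd : ∀ t ω m s, A t ω m s ≤ Amax) (hNmem : ∀ t l ω, Npol t l ω ∈ 𝒩 l)
    (hNmax : ∀ l, ∀ N ∈ 𝒩 l, ∑ m, ∑ s, N m s ≤ Nmax) (hQmeas : ∀ t, Measurable (Q t))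
    {q0 : Fin M → Fin S → ℕ} (hQ0 : ∀ ω, Q 0 ω = q0)
    (hQrec : ∀ t ω m i, Q (t + 1) ω m i
        = (Q t ω m i - ∑ l, Npol t l ω m i) + A t ω m i
          + min (∑ l, nxt (Npol t l ω m) i) (nxt (Q t ω m) i))
    (T : ℕ) (m : Fin M) (i : Fin S) : Integrable (fun ω => (Q T ω m i : ℝ)) μ := by
  refine integrable_natCast_comp (hQmeas T) (fun q => q m i) (B := q0 m i + T * (Amax + L * Nmax))
    fun ω => ?_
  have hB : ∀ t i, A t ω m i + nxt (fun j => ∑ l, Npol t l ω m j) i ≤ Amax + L * Nmax :=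
    fun t i => add_le_add (hAbdd t ω m i) <| nxt_le (fun j => by
      simpa using Finset.sum_le_sum fun l (_ : l ∈ Finset.univ) =>
        apply_le_of_sum_sum_le (hNmax l _ (hNmem t l ω)) m j) i
  simpa [hQ0 ω] using queue_le (q := fun t => Q t ω m) (a := fun t => A t ω m)
    (fun t i => by rw [hQrec, nxt_finset_sum]) hB T i

lemma mul_workloadRate_le (hAmeas : ∀ t, Measurable (A t))
    (hAbdd : ∀ t ω m s, A t ω m s ≤ Amax) {lam : Fin M → Fin S → ℝ}
    (hAmean : ∀ t m s, (∫ ω, (A t ω m s : ℝ) ∂μ) = lam m s)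
    (hNmeas : ∀ t l, Measurable (Npol t l)) (hNmem : ∀ t l ω, Npol t l ω ∈ 𝒩 l)
    (hNmax : ∀ l, ∀ N ∈ 𝒩 l, ∑ m, ∑ s, N m s ≤ Nmax) (hQmeas : ∀ t, Measurable (Q t))
    {q0 : Fin M → Fin S → ℕ} (hQ0 : ∀ ω, Q 0 ω = q0)
    (hQrec : ∀ t ω m i, Q (t + 1) ω m i
        = (Q t ω m i - ∑ l, Npol t l ω m i) + A t ω m i
          + min (∑ l, nxt (Npol t l ω m) i) (nxt (Q t ω m) i))
    (m : Fin M) (T : ℕ) :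
    (T : ℝ) * ∑ s : Fin S, ((s : ℕ) + 1 : ℝ) * lam m s
      ≤ S * ∑ m', ∑ s, ∫ ω, (Q T ω m' s : ℝ) ∂μ
        + ∑ t ∈ Finset.Icc 1 T, ∫ ω, ∑ l, ∑ s, ((configPair Npol l t ω).1 m s : ℝ) ∂μ := by
  have hAint : ∀ t s, Integrable (fun ω => (A t ω m s : ℝ)) μ := fun t s =>
    integrable_natCast_comp (hAmeas t) (fun a => a m s) fun ω => hAbdd t ω m s
  have hQint := integrable_queue hAbdd hNmem hNmax hQmeas hQ0 hQrec (μ := μ) T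
  have hservice : ∀ t, Integrable
      (fun ω => ∑ l, ∑ s, ((configPair Npol l t ω).1 m s : ℝ)) μ := fun t =>
    integrable_finsetSum _ fun l _ => integrable_comp_of_forall_mem
      (measurable_configPair hNmeas l t) (configPair_mem hNmem l t)
      fun q => ∑ s, (q.1 m s : ℝ)
  have hpointwise : ∀ ω, ∑ t ∈ Finset.range T, workload (A t ω m)
      ≤ S * ∑ m', ∑ s, Q T ω m' s
        + ∑ t ∈ Finset.Icc 1 T, ∑ l, ∑ s, (configPair Npol l t ω).1 m s := fun ω => by
    have hbalance := sum_workload_le (q := fun t => Q t ω m) (a := fun t => A t ω m)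
      (d := fun t i => ∑ l, Npol t l ω m i) (fun t i => by rw [hQrec, nxt_finset_sum]) T
    have hQ : S * ∑ s, Q T ω m s ≤ S * ∑ m', ∑ s, Q T ω m' s :=
      Nat.mul_le_mul_left _ (Finset.single_le_sum (f := fun m' => ∑ s, Q T ω m' s)
        (fun _ _ => Nat.zero_le _) (Finset.mem_univ m))
    have hservice_eq : ∑ t ∈ Finset.Icc 1 T, ∑ l, ∑ s, (configPair Npol l t ω).1 m s
        = ∑ t ∈ Finset.range T, ∑ s, ∑ l, Npol t l ω m s :=
      (sum_Icc_one_sub_one (fun t => ∑ l, ∑ s, Npol t l ω m s) T).trans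
        (Finset.sum_congr rfl fun t _ => Finset.sum_comm)
    have := workload_le (Q T ω m)
    omega
  calc (T : ℝ) * ∑ s : Fin S, ((s : ℕ) + 1 : ℝ) * lam m s
      = ∫ ω, ∑ t ∈ Finset.range T, ∑ s : Fin S, ((s : ℕ) + 1 : ℝ) * (A t ω m s : ℝ) ∂μ := by
        rw [integral_finsetSum _ fun t _ =>
          integrable_finsetSum _ fun s _ => (hAint t s).const_mul _]
        simp [integral_finsetSum _ fun s _ => (hAint _ s).const_mul _, integral_const_mul, hAmean]
    _ ≤ ∫ ω, ((S : ℝ) * ∑ m', ∑ s, (Q T ω m' s : ℝ)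
          + ∑ t ∈ Finset.Icc 1 T, ∑ l, ∑ s, ((configPair Npol l t ω).1 m s : ℝ)) ∂μ := by
        refine integral_mono
          (integrable_finsetSum _ fun t _ =>
            integrable_finsetSum _ fun s _ => (hAint t s).const_mul _)
          (((integrable_finsetSum _ fun m' _ => integrable_finsetSum _ fun s _ =>
            hQint m' s).const_mul _).add (integrable_finsetSum _ fun t _ => hservice t))
          fun ω => ?_
        have := hpointwise ω
        simp only [workload] at this
        exact_mod_cast this
    _ = _ := by
        rw [integral_add ((integrable_finsetSum _ fun m' _ => integrable_finsetSum _ fun s _ =>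
            hQint m' s).const_mul _) (integrable_finsetSum _ fun t _ => hservice t),
          integral_const_mul, integral_finsetSum _ fun t _ => hservice t,
          integral_finsetSum _ fun m' _ => integrable_finsetSum _ fun s _ => hQint m' s]
        simp only [integral_finsetSum _ fun s _ => hQint _ s]

lemma workloadRate_le_of_tendsto (hAmeas : ∀ t, Measurable (A t))
    (hAbdd : ∀ t ω m s, A t ω m s ≤ Amax) {lam : Fin M → Fin S → ℝ}
    (hAmean : ∀ t m s, (∫ ω, (A t ω m s : ℝ) ∂μ) = lam m s)
    (hNmeas : ∀ t l, Measurable (Npol t l)) (hNmem : ∀ t l ω, Npol t l ω ∈ 𝒩 l)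
    (hNmax : ∀ l, ∀ N ∈ 𝒩 l, ∑ m, ∑ s, N m s ≤ Nmax) (hQmeas : ∀ t, Measurable (Q t))
    {q0 : Fin M → Fin S → ℕ} (hQ0 : ∀ ω, Q 0 ω = q0)
    (hQrec : ∀ t ω m i, Q (t + 1) ω m i
        = (Q t ω m i - ∑ l, Npol t l ω m i) + A t ω m i
          + min (∑ l, nxt (Npol t l ω m) i) (nxt (Q t ω m) i))
    (hstable : ∃ C : ℝ, ∀ᶠ t in atTop, (∑ m, ∑ s, ∫ ω, (Q t ω m s : ℝ) ∂μ) ≤ C)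
    {σ : ℕ → ℕ} (hσ : Tendsto σ atTop atTop) {R : Fin L → Config M S × Config M S → ℝ}
    (hR : ∀ l q, Tendsto (fun k => avgPairLaw μ Npol (σ k) l q) atTop (𝓝 (R l q))) (m : Fin M) :
    ∑ s : Fin S, ((s : ℕ) + 1 : ℝ) * lam m s
      ≤ ∑ l, ∑ q ∈ 𝒩 l ×ˢ 𝒩 l, R l q * ∑ s, (q.1 m s : ℝ) := by
  obtain ⟨C, hC⟩ := hstable
  have hbound : ∀ᶠ T : ℕ in atTop, ∑ s : Fin S, ((s : ℕ) + 1 : ℝ) * lam m s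
      ≤ (T : ℝ)⁻¹ * (S * C)
        + ∑ l, ∑ q ∈ 𝒩 l ×ˢ 𝒩 l, avgPairLaw μ Npol T l q * ∑ s, (q.1 m s : ℝ) := by
    filter_upwards [hC, eventually_ge_atTop 1] with T hQT hT
    rw [← cesaroMean_integral_sum_configPair hNmeas hNmem (fun _ q => ∑ s, (q.1 m s : ℝ)),
      cesaroMean, ← mul_add, le_inv_mul_iff₀ (by positivity)]
    calc _ ≤ _ := mul_workloadRate_le hAmeas hAbdd hAmean hNmeas hNmem hNmax hQmeas hQ0 hQrec m T
      _ ≤ _ := by gcongr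
  have hlim : Tendsto (fun k => (σ k : ℝ)⁻¹ * (S * C)
      + ∑ l, ∑ q ∈ 𝒩 l ×ˢ 𝒩 l, avgPairLaw μ Npol (σ k) l q * ∑ s, (q.1 m s : ℝ)) atTop
      (𝓝 (0 * (S * C) + ∑ l, ∑ q ∈ 𝒩 l ×ˢ 𝒩 l, R l q * ∑ s, (q.1 m s : ℝ))) :=
    ((tendsto_inv_atTop_zero.comp (tendsto_natCast_atTop_atTop.comp hσ)).mul_const _).add
      (tendsto_finsetSum _ fun l _ => tendsto_finsetSum _ fun q _ => (hR l q).mul_const _)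
  simpa using ge_of_tendsto hlim (hσ.eventually hbound)

lemma exists_subseq_tendsto_avgCost_mem_CoptSet (c0 : ℝ) (c : Fin M → ℝ) (V U : ℝ)
    {lam : Fin M → Fin S → ℝ} (hlam : ∀ m s, 0 ≤ lam m s) (hAmeas : ∀ t, Measurable (A t))
    (hAbdd : ∀ t ω m s, A t ω m s ≤ Amax)
    (hAmean : ∀ t m s, (∫ ω, (A t ω m s : ℝ) ∂μ) = lam m s)
    (hNmeas : ∀ t l, Measurable (Npol t l)) (hNmem : ∀ t l ω, Npol t l ω ∈ 𝒩 l)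
    (hNmax : ∀ l, ∀ N ∈ 𝒩 l, ∑ m, ∑ s, N m s ≤ Nmax) (hQmeas : ∀ t, Measurable (Q t))
    {q0 : Fin M → Fin S → ℕ} (hQ0 : ∀ ω, Q 0 ω = q0)
    (hQrec : ∀ t ω m i, Q (t + 1) ω m i
        = (Q t ω m i - ∑ l, Npol t l ω m i) + A t ω m i
          + min (∑ l, nxt (Npol t l ω m) i) (nxt (Q t ω m) i))
    (hstable : ∃ C : ℝ, ∀ᶠ t in atTop, (∑ m, ∑ s, ∫ ω, (Q t ω m s : ℝ) ∂μ) ≤ C)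
    {ψ : ℕ → ℕ} (hψ : StrictMono ψ) :
    ∃ φ : ℕ → ℕ, StrictMono φ ∧ ∃ x ∈ CoptSet 𝒩 c0 c V U lam,
      Tendsto (fun k => cesaroMean (fun t => ∫ ω, ∑ l, (V * C1 c0 c (Npol t l ω)
        + U * (C2 (Npol (t - 1) l ω) (Npol t l ω) : ℝ)) ∂μ) (ψ (φ k))) atTop (𝓝 x) := by
  obtain ⟨R, φ, hφ, hR⟩ := exists_subseq_tendsto_of_mem_Icc
    (u := fun k (i : Fin L × (Config M S × Config M S)) => avgPairLaw μ Npol (ψ k) i.1 i.2)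
    fun k i => avgPairLaw_mem_Icc _ _ _
  have hσ : Tendsto (fun k => ψ (φ k)) atTop atTop := (hψ.comp hφ).tendsto_atTop
  have hR' : ∀ l q, Tendsto (fun k => avgPairLaw μ Npol (ψ (φ k)) l q) atTop (𝓝 (R (l, q))) :=
    fun l q => hR (l, q)
  refine ⟨φ, hφ, _, mem_CoptSet_of_isStationaryPairLaw c0 c V U
    (isStationaryPairLaw_of_tendsto hNmeas hNmem hσ hR') hlam
    (workloadRate_le_of_tendsto hAmeas hAbdd hAmean hNmeas hNmem hNmax hQmeas hQ0 hQrec hstable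
      hσ hR'), ?_⟩
  refine Tendsto.congr (fun k => (cesaroMean_integral_sum_configPair (μ := μ) hNmeas hNmem
    (fun _ q => V * C1 c0 c q.2 + U * (C2 q.1 q.2 : ℝ)) (ψ (φ k))).symm) ?_
  exact tendsto_finsetSum _ fun l _ => tendsto_finsetSum _ fun q _ => (hR' l q).mul_const _

end Queue

theorem average_cost_lower_bound_general
    (L M S Amax Nmax : ℕ)
    -- Feasible configuration sets: finite, containing the zero configuration,
    -- with at most `Nmax` VMs in any configuration.
    (𝒩 : Fin L → Finset (Config M S))
    (hNmax : ∀ l, ∀ N ∈ 𝒩 l, ∑ m, ∑ s, N m s ≤ Nmax)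
    -- Cost coefficients.
    (c0 : ℝ) (c : Fin M → ℝ) (hc0 : 0 ≤ c0) (hc : ∀ m, 0 ≤ c m)
    (V U : ℝ) (hV : 0 ≤ V) (hU : 0 ≤ U)
    -- Arrival rates in the capacity region.
    (lam : Fin M → Fin S → ℝ) (hlam : inCap 𝒩 lam)
    {Ω : Type} [MeasurableSpace Ω] (μ : Measure Ω) [IsProbabilityMeasure μ]
    -- Arrival process: i.i.d. across slots, bounded, with the given rates,
    -- and a positive probability of no arrivals.
    (A : ℕ → Ω → Fin M → Fin S → ℕ)
    (hAmeas : ∀ t, Measurable (A t))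
    (hAbdd : ∀ t ω m s, A t ω m s ≤ Amax)
    (hAmean : ∀ t m s, (∫ ω, (A t ω m s : ℝ) ∂μ) = lam m s)
    -- An arbitrary scheduling policy and the induced queue process.
    (Npol : ℕ → Fin L → Ω → Config M S)
    (hNmeas : ∀ t l, Measurable (Npol t l))
    (hNmem : ∀ t l ω, Npol t l ω ∈ 𝒩 l)
    (Q : ℕ → Ω → Fin M → Fin S → ℕ)
    (hQmeas : ∀ t, Measurable (Q t))
    (q0 : Fin M → Fin S → ℕ) (hQ0 : ∀ ω, Q 0 ω = q0)
    -- Queue length evolution.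
    (hQrec : ∀ t ω m i, Q (t + 1) ω m i
        = (Q t ω m i - ∑ l, Npol t l ω m i) + A t ω m i
          + min (∑ l, nxt (Npol t l ω m) i) (nxt (Q t ω m) i))
    -- Stability: `limsup_t Σ_{m,s} E[Q_{m,s}(t)] < ∞`.
    (hstable : ∃ C : ℝ, ∀ᶠ t in Filter.atTop,
        (∑ m, ∑ s, ∫ ω, (Q t ω m s : ℝ) ∂μ) ≤ C) :
    (Copt 𝒩 c0 c V U lam : EReal)
      ≤ Filter.liminf (fun T : ℕ =>
          (((T : ℝ)⁻¹ * ∑ t ∈ Finset.Icc 1 T, ∫ ω,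
              (∑ l, (V * C1 c0 c (Npol t l ω)
                + U * (C2 (Npol (t - 1) l ω) (Npol t l ω) : ℝ))) ∂μ) : EReal))
          Filter.atTop := by
  refine coe_le_liminf_of_forall_subseq fun ψ hψ => ?_
  obtain ⟨φ, hφ, x, hx, hlim⟩ := exists_subseq_tendsto_avgCost_mem_CoptSet c0 c V U hlam.1
    hAmeas hAbdd hAmean hNmeas hNmem hNmax hQmeas hQ0 hQrec hstable hψ
  exact ⟨φ, hφ, x, csInf_le (bddBelow_CoptSet 𝒩 hc0 hc hV hU lam) hx, hlim⟩

/-- Lemma 1 of the paper: for any arrival rate vector `λ` in the capacity region and any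
scheduling policy (arbitrary configuration-valued stochastic process `Npol`) rendering the
queueing system stable, the long-run average cost
`liminf_T (1/T) Σ_{t=1}^T E[Σ_l (V·C₁(N^l(t)) + U·C₂(N^l(t−1), N^l(t)))]`
is at least `C_opt(λ)`. -/
theorem average_cost_lower_bound
    (L M S Amax Nmax : ℕ) (hL : 1 ≤ L) (hM : 1 ≤ M) (hS : 1 ≤ S)
    -- Feasible configuration sets: finite, containing the zero configuration,
    -- with at most `Nmax` VMs in any configuration.
    (𝒩 : Fin L → Finset (Config M S))
    (h0mem : ∀ l, (0 : Config M S) ∈ 𝒩 l)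
    (hNmax : ∀ l, ∀ N ∈ 𝒩 l, ∑ m, ∑ s, N m s ≤ Nmax)
    -- Cost coefficients.
    (c0 : ℝ) (c : Fin M → ℝ) (hc0 : 0 ≤ c0) (hc : ∀ m, 0 ≤ c m)
    (V U : ℝ) (hV : 0 ≤ V) (hU : 0 ≤ U)
    -- Arrival rates in the capacity region.
    (lam : Fin M → Fin S → ℝ) (hlam : inCap 𝒩 lam)
    {Ω : Type} [MeasurableSpace Ω] (μ : Measure Ω) [IsProbabilityMeasure μ]
    -- Arrival process: i.i.d. across slots, bounded, with the given rates,
    -- and a positive probability of no arrivals.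
    (A : ℕ → Ω → Fin M → Fin S → ℕ)
    (hAmeas : ∀ t, Measurable (A t))
    (hAident : ∀ t, IdentDistrib (A t) (A 0) μ μ)
    (hAindep : iIndepFun A μ)
    (hAbdd : ∀ t ω m s, A t ω m s ≤ Amax)
    (hAmean : ∀ t m s, (∫ ω, (A t ω m s : ℝ) ∂μ) = lam m s)
    (hAzero : ∀ t, 0 < μ {ω | A t ω = 0})
    -- An arbitrary scheduling policy and the induced queue process.
    (Npol : ℕ → Fin L → Ω → Config M S)
    (hNmeas : ∀ t l, Measurable (Npol t l))
    (hNmem : ∀ t l ω, Npol t l ω ∈ 𝒩 l)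
    (Q : ℕ → Ω → Fin M → Fin S → ℕ)
    (hQmeas : ∀ t, Measurable (Q t))
    (q0 : Fin M → Fin S → ℕ) (hQ0 : ∀ ω, Q 0 ω = q0)
    -- Queue length evolution.
    (hQrec : ∀ t ω m i, Q (t + 1) ω m i
        = (Q t ω m i - ∑ l, Npol t l ω m i) + A t ω m i
          + min (∑ l, nxt (Npol t l ω m) i) (nxt (Q t ω m) i))
    -- Stability: `limsup_t Σ_{m,s} E[Q_{m,s}(t)] < ∞`.
    (hstable : ∃ C : ℝ, ∀ᶠ t in Filter.atTop,
        (∑ m, ∑ s, ∫ ω, (Q t ω m s : ℝ) ∂μ) ≤ C) :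
    (Copt 𝒩 c0 c V U lam : EReal)
      ≤ Filter.liminf (fun T : ℕ =>
          (((T : ℝ)⁻¹ * ∑ t ∈ Finset.Icc 1 T, ∫ ω,
              (∑ l, (V * C1 c0 c (Npol t l ω)
                + U * (C2 (Npol (t - 1) l ω) (Npol t l ω) : ℝ))) ∂μ) : EReal))
          Filter.atTop :=
  average_cost_lower_bound_general L M S Amax Nmax 𝒩 hNmax c0 c hc0 hc V U hV hU lam hlam μ A hAmeas
    hAbdd hAmean Npol hNmeas hNmem Q hQmeas q0 hQ0 hQrec hstable
end

section
/- Let M, S ∈ ℕ and let n, N̄, N ∈ ℕ^{M×S} satisfy, for all m ∈ {1,…,M} and s ∈ {1,…,S}: N_{m,s} ≤ N̄_{m,s} and N_{m,s} ≥ min{ n_{m,s+1}, N̄_{m,s} } (with the convention n_{m,S+1} = 0). Then Σ_{m=1}^{M} Σ_{s=2}^{S} ( n_{m,s} − N̄_{m,s−1} )⁺ = Σ_{m=1}^{M} Σ_{s=2}^{S} ( n_{m,s} − N_{m,s−1} )⁺; that is, the job migration cost computed with the actual service configuration N equals the migration cost computed with the offered configuration N̄. -/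
/-- Invariance of the job migration cost: if the actual configuration `N` satisfies
`N_{m,s} ≤ N̄_{m,s}` and `N_{m,s} ≥ min{n_{m,s+1}, N̄_{m,s}}` (with `n_{m,S+1} = 0`),
then the migration cost computed with `N̄` equals the one computed with `N`.
Sizes `s ∈ {1,…,S}` are represented by indices `i : Fin S` with `s = i + 1`, so the
pair `(n_{m,s}, N_{m,s−1})` for `s ∈ {2,…,S}` becomes `(n m ⟨i+1⟩, N m i)`, and
truncated natural subtraction realizes the positive part `(·)⁺`. -/
theorem migration_cost_offered_eq_actual
    (M S : ℕ) (n Nbar N : Fin M → Fin S → ℕ)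
    (hle : ∀ m s, N m s ≤ Nbar m s)
    (hretain : ∀ (m : Fin M) (i : Fin S),
      min (if h : (i : ℕ) + 1 < S then n m ⟨(i : ℕ) + 1, h⟩ else 0) (Nbar m i) ≤ N m i) :
    (∑ m, ∑ i : Fin S,
        (if h : (i : ℕ) + 1 < S then n m ⟨(i : ℕ) + 1, h⟩ - Nbar m i else 0))
      = ∑ m, ∑ i : Fin S,
        (if h : (i : ℕ) + 1 < S then n m ⟨(i : ℕ) + 1, h⟩ - N m i else 0) := by
  refine Finset.sum_congr rfl fun m _ => Finset.sum_congr rfl fun i _ => ?_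
  have h1 := hle m i
  have h2 := hretain m i
  by_cases h : (i : ℕ) + 1 < S
  · simp only [dif_pos h] at *
    omega
  · simp [h]
end
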